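/- arXiv:2604.27950 — 4 statements merged into one kernel-verified Lean document; each statement's English description precedes it below -/
import Mathlib

section
/- Let V be a finite-dimensional real vector space and let T : V^d × V^d → ℝ be a multilinear form that is symmetric in its first d arguments and symmetric in its last d arguments. If T(X,...,X, P, P,...,P) = 0 for all X, P ∈ V (with d+1 copies of X and d−1 copies of P, i.e. the symmetrization of T over d+1 of its slots vanishes), then T(P,...,P, X,...,X) = (−1)^d · T(X,...,X, P,...,P) for all X, P ∈ V. -/
open Finset

lemma poly_coeff_zero (N : ℕ) (u : ℕ → ℝ)
    (h : ∀ t : ℝ, ∑ j ∈ Finset.range N, u j * t ^ j = 0) :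
    ∀ j < N, u j = 0 := by
  intro j hj
  have hpz : (∑ j ∈ Finset.range N, Polynomial.C (u j) * Polynomial.X ^ j : Polynomial ℝ) = 0 :=
    Polynomial.funext (fun t => by simp [Polynomial.eval_finset_sum, h t])
  have := congrArg (fun p : Polynomial ℝ => p.coeff j) hpz
  simpa [Polynomial.finset_sum_coeff, Polynomial.coeff_C_mul, Polynomial.coeff_X_pow,
    Finset.sum_ite_eq' (Finset.range N), Finset.mem_range, hj] using this

lemma exists_perm_mem_iff {d : ℕ} (s t : Finset (Fin d)) (h : s.card = t.card) :
    ∃ σ : Equiv.Perm (Fin d), ∀ i, σ i ∈ s ↔ i ∈ t := by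
  classical
  have h' : tᶜ.card = sᶜ.card := by simp [Finset.card_compl, h]
  let e1 : (t : Finset (Fin d)) ≃ s := Finset.equivOfCardEq h.symm
  let e2 : (tᶜ : Finset (Fin d)) ≃ (sᶜ : Finset (Fin d)) := Finset.equivOfCardEq h'
  let e2' : {x : Fin d // ¬ x ∈ t} ≃ {x : Fin d // ¬ x ∈ s} :=
    ((Equiv.subtypeEquivRight (fun x => (Finset.mem_compl (s := t)).symm)).trans e2).trans
      (Equiv.subtypeEquivRight (fun x => Finset.mem_compl (s := s)))
  refine ⟨((Equiv.sumCompl (· ∈ t)).symm.trans (Equiv.sumCongr e1 e2')).trans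
      (Equiv.sumCompl (· ∈ s)), fun i => ?_⟩
  by_cases hi : i ∈ t
  · simp [Equiv.sumCompl_symm_apply_of_pos hi, hi, Finset.coe_mem]
  · simp only [Equiv.trans_apply, Equiv.sumCompl_symm_apply_of_neg hi, Equiv.sumCongr_apply,
      Sum.map_inr, Equiv.sumCompl_apply_inr]
    simpa [hi] using (e2' ⟨i, hi⟩).2

lemma card_K {d j : ℕ} (hj : j ≤ d) :
    (Finset.univ.filter (fun i : Fin d => (i : ℕ) < j)).card = j := by
  refine (Finset.card_bij (s := Finset.univ.filter (fun i : Fin d => (i : ℕ) < j))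
    (t := Finset.range j) (fun a _ => (a : ℕ)) ?_ ?_ ?_).trans (Finset.card_range j)
  · intro a ha; simp only [Finset.mem_filter] at ha; simp [ha.2]
  · intro a _ b _ h; exact Fin.val_injective h
  · intro b hb
    simp only [Finset.mem_range] at hb
    exact ⟨⟨b, lt_of_lt_of_le hb hj⟩, by simp [hb], rfl⟩

/-- A (d+d)-multilinear real form, symmetric in each block of d arguments,
whose symmetrization over d+1 slots vanishes, satisfies
T(P^d, X^d) = (-1)^d T(X^d, P^d). -/
theorem stmt_0 {V : Type*} [AddCommGroup V] [Module ℝ V] [FiniteDimensional ℝ V]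
    {d : ℕ} (hd : 1 ≤ d)
    (T : MultilinearMap ℝ (fun _ : Fin d => V) (MultilinearMap ℝ (fun _ : Fin d => V) ℝ))
    (hsym1 : ∀ (x y : Fin d → V) (σ : Equiv.Perm (Fin d)), T (x ∘ σ) y = T x y)
    (hsym2 : ∀ (x y : Fin d → V) (σ : Equiv.Perm (Fin d)), T x (y ∘ σ) = T x y)
    (hvan : ∀ X P : V,
      T (fun _ => X) (Function.update (fun _ => P) ⟨0, hd⟩ X) = 0) :
    ∀ X P : V, T (fun _ => P) (fun _ => X) = (-1 : ℝ) ^ d * T (fun _ => X) (fun _ => P) := by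
  classical
  -- canonicalization in the second block
  have hC2 : ∀ (A B : V) (x : Fin d → V) (s : Finset (Fin d)),
      T x (fun i => if i ∈ s then A else B) =
      T x (fun i => if (i : ℕ) < s.card then A else B) := by
    intro A B x s
    have hsd : s.card ≤ d := le_trans (Finset.card_le_univ s) (by simp)
    obtain ⟨σ, hσ⟩ := exists_perm_mem_iff
      (Finset.univ.filter (fun i : Fin d => (i : ℕ) < s.card)) s (card_K hsd)
    calc T x (fun i => if i ∈ s then A else B)
        = T x ((fun i => if i ∈ Finset.univ.filter (fun i : Fin d => (i : ℕ) < s.card)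
            then A else B) ∘ σ) := by
          congr 1; funext i
          exact (if_congr (hσ i) rfl rfl).symm
      _ = T x (fun i => if i ∈ Finset.univ.filter (fun i : Fin d => (i : ℕ) < s.card)
            then A else B) := hsym2 _ _ σ
      _ = T x (fun i => if (i : ℕ) < s.card then A else B) := by
          congr 1; funext i; simp
  have hC1 : ∀ (A B : V) (y : Fin d → V) (s : Finset (Fin d)),
      T (fun i => if i ∈ s then A else B) y =
      T (fun i => if (i : ℕ) < s.card then A else B) y := by
    intro A B y s
    have hsd : s.card ≤ d := le_trans (Finset.card_le_univ s) (by simp)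
    obtain ⟨σ, hσ⟩ := exists_perm_mem_iff
      (Finset.univ.filter (fun i : Fin d => (i : ℕ) < s.card)) s (card_K hsd)
    have e1 : (fun i => if i ∈ s then A else B) =
        ((fun i => if i ∈ Finset.univ.filter (fun i : Fin d => (i : ℕ) < s.card)
          then A else B) ∘ σ) := funext fun i => (if_congr (hσ i) rfl rfl).symm
    have e2 : (fun i => if i ∈ Finset.univ.filter (fun i : Fin d => (i : ℕ) < s.card)
        then A else B) = (fun i : Fin d => if (i : ℕ) < s.card then A else B) := by
      funext i; simp
    rw [e1, hsym1 _ _ σ, e2]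
  -- Step 1 : T(X^d, X^j P^(d-j)) = 0 for 1 ≤ j ≤ d
  have lem1 : ∀ (X P : V) (j : ℕ), 1 ≤ j → j ≤ d →
      T (fun _ => X) (fun i => if (i : ℕ) < j then X else P) = 0 := by
    intro X P j hj1 hjd
    set z : Fin d := ⟨0, hd⟩ with hzdef
    set m' : Fin d → V := Function.update (fun _ => P) z X with hm'
    have expand : ∀ s : ℝ, Function.update (fun _ => P + s • X) z X =
        ({z}ᶜ : Finset (Fin d)).piecewise ((fun _ => s • X) + m') m' := by
      intro s; funext i
      by_cases h : i = z
      · subst h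
        simp [Finset.piecewise, hm']
      · simp [Finset.piecewise, h, Function.update_of_ne h, hm', add_comm]
    have step1 : ∀ s : ℝ, ∑ u ∈ ({z}ᶜ : Finset (Fin d)).powerset,
        (T (fun _ => X)) (u.piecewise (fun _ => s • X) m') = 0 := by
      intro s
      rw [← MultilinearMap.map_piecewise_add, ← expand s]
      exact hvan X (P + s • X)
    have step2 : ∀ (s : ℝ) (u : Finset (Fin d)), u ∈ ({z}ᶜ : Finset (Fin d)).powerset →
        (T (fun _ => X)) (u.piecewise (fun _ => s • X) m') =
        s ^ u.card * (T (fun _ => X)) (fun i => if (i : ℕ) < u.card + 1 then X else P) := by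
      intro s u hu
      have hzu : z ∉ u := fun h =>
        (Finset.mem_compl.1 (Finset.mem_powerset.1 hu h)) (Finset.mem_singleton_self z)
      have e1 : u.piecewise (fun _ => s • X) m' =
          u.piecewise (fun i => s • (u.piecewise (fun _ => X) m') i) (u.piecewise (fun _ => X) m') := by
        funext i; by_cases h : i ∈ u <;> simp [Finset.piecewise, h]
      rw [e1, MultilinearMap.map_piecewise_smul]
      simp only [Finset.prod_const, smul_eq_mul]
      congr 1
      have e2 : u.piecewise (fun _ => X) m' = (fun i => if i ∈ insert z u then X else P) := by
        funext i
        by_cases h : i ∈ u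
        · simp [Finset.piecewise, h]
        · by_cases h' : i = z
          · subst h'; simp [Finset.piecewise, h, hm']
          · simp [Finset.piecewise, h, h', hm', Function.update_of_ne h']
      rw [e2, hC2, Finset.card_insert_of_notMem hzu]
    have hcompl : ({z}ᶜ : Finset (Fin d)).card = d - 1 := by
      simp [Finset.card_compl]
    have hsum : ∀ s : ℝ, ∑ m ∈ Finset.range d,
        (((d-1).choose m : ℝ) * (T (fun _ => X)) (fun i => if (i : ℕ) < m + 1 then X else P)) * s ^ m
          = 0 := by
      intro s
      have h0 := step1 s
      rw [Finset.sum_congr rfl (step2 s)] at h0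
      rw [Finset.sum_powerset_apply_card
        (fun n => s ^ n * (T (fun _ => X)) (fun i => if (i : ℕ) < n + 1 then X else P))] at h0
      rw [hcompl, Nat.sub_add_cancel hd] at h0
      rw [← h0]
      refine Finset.sum_congr rfl fun m _ => ?_
      simp [nsmul_eq_mul]; ring
    have := poly_coeff_zero d _ hsum (j - 1) (by omega)
    have hch : (((d-1).choose (j-1) : ℕ) : ℝ) ≠ 0 := by
      exact_mod_cast (Nat.choose_pos (by omega : j - 1 ≤ d - 1)).ne'
    have hg := (mul_eq_zero.1 this).resolve_left hch
    have hj : j - 1 + 1 = j := by omega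
    rwa [hj] at hg
  intro X P
  set c : ℕ → ℕ → ℝ := fun a b =>
    T (fun i => if (i : ℕ) < a then X else P) (fun i => if (i : ℕ) < b then X else P) with hc
  -- Step 2 : the fiber relations
  have rel : ∀ k, 1 ≤ k → k ≤ d →
      ∑ a ∈ Finset.range (k+1), (d.choose a : ℝ) * (k.choose a : ℝ) * c (d-a) a = 0 := by
    intro k hk1 hkd
    set Kk : Finset (Fin d) := Finset.univ.filter (fun i : Fin d => (i : ℕ) < k) with hKk
    have hKkcard : Kk.card = k := card_K hkd
    set m2 : Fin d → V := fun i => if (i : ℕ) < k then X else P with hm2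
    have expand : ∀ t : ℝ, ∑ u ∈ (Finset.univ : Finset (Fin d)).powerset,
        (t ^ u.card * ∑ u' ∈ Kk.powerset, t ^ u'.card * c (d - u.card) (k - u'.card)) = 0 := by
      intro t
      have h0 : T (fun _ => X + t • P) (fun i => if (i : ℕ) < k then X + t • P else P) = 0 :=
        lem1 (X + t • P) P k hk1 hkd
      have e1 : (fun _ : Fin d => X + t • P) = ((fun _ : Fin d => t • P) + fun _ => X) := by
        funext i; exact add_comm _ _
      rw [e1, MultilinearMap.map_add_univ, MultilinearMap.sum_apply,
        ← Finset.powerset_univ] at h0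
      rw [← h0]
      refine Finset.sum_congr rfl fun u _ => ?_
      -- pull out the scalars of the first block
      have hpw : u.piecewise (fun _ => t • P) (fun _ => X) =
          u.piecewise (fun i => t • (u.piecewise (fun _ => P) (fun _ => X)) i)
            (u.piecewise (fun _ => P) (fun _ => X)) := by
        funext i; by_cases h : i ∈ u <;> simp [Finset.piecewise, h]
      rw [hpw, MultilinearMap.map_piecewise_smul, Finset.prod_const,
        MultilinearMap.smul_apply, smul_eq_mul]
      congr 1
      -- canonicalize the first block
      have hbu : u.piecewise (fun _ => P) (fun _ => X) =
          fun i => if i ∈ uᶜ then X else P := by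
        funext i; by_cases h : i ∈ u <;> simp [Finset.piecewise, h]
      have hcu : (uᶜ : Finset (Fin d)).card = d - u.card := by
        simp [Finset.card_compl]
      rw [hbu, hC1 X P _ uᶜ, hcu]
      -- expand the second block
      have hw : (fun i : Fin d => if (i : ℕ) < k then X + t • P else P) =
          Kk.piecewise ((fun _ => t • P) + m2) m2 := by
        funext i
        by_cases h : (i : ℕ) < k <;>
          simp [Finset.piecewise, hKk, h, hm2, add_comm]
      rw [hw, MultilinearMap.map_piecewise_add]
      refine Finset.sum_congr rfl fun u' hu' => ?_
      have hu'sub : u' ⊆ Kk := Finset.mem_powerset.1 hu'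
      have hpw2 : u'.piecewise (fun _ => t • P) m2 =
          u'.piecewise (fun i => t • (u'.piecewise (fun _ => P) m2) i)
            (u'.piecewise (fun _ => P) m2) := by
        funext i; by_cases h : i ∈ u' <;> simp [Finset.piecewise, h]
      rw [hpw2, MultilinearMap.map_piecewise_smul, Finset.prod_const, smul_eq_mul]
      congr 1
      have hb2 : u'.piecewise (fun _ => P) m2 = fun i => if i ∈ Kk \ u' then X else P := by
        funext i
        by_cases h : i ∈ u'
        · simp [Finset.piecewise, h, Finset.mem_sdiff]
        · by_cases h2 : i ∈ Kk
          · have hik : (i : ℕ) < k := by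
              have h3 := h2; rw [hKk] at h3; exact (Finset.mem_filter.1 h3).2
            simp [Finset.piecewise, h, h2, hm2, hik, Finset.mem_sdiff]
          · have hik : ¬ (i : ℕ) < k := by
              intro hlt
              exact h2 (by rw [hKk]; exact Finset.mem_filter.2 ⟨Finset.mem_univ i, hlt⟩)
            simp [Finset.piecewise, h, h2, hm2, hik, Finset.mem_sdiff]
      rw [hb2, hC2 X P, Finset.card_sdiff_of_subset hu'sub, hKkcard]
    -- regroup as a polynomial identity in t
    have hpoly : ∀ t : ℝ, ∑ j ∈ Finset.range (d+k+1),
        (∑ a ∈ Finset.range (d+1), ∑ b ∈ Finset.range (k+1),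
          (if a + b = j then (d.choose a : ℝ) * (k.choose b : ℝ) * c (d-a) (k-b) else 0)) * t ^ j
        = 0 := by
      intro t
      have h0 := expand t
      rw [Finset.sum_powerset_apply_card
        (fun n => t ^ n * ∑ u' ∈ Kk.powerset, t ^ u'.card * c (d - n) (k - u'.card))] at h0
      simp only [Finset.card_univ, Fintype.card_fin] at h0
      have h1 : ∀ a ∈ Finset.range (d+1),
          ((d.choose a) • (t ^ a * ∑ u' ∈ Kk.powerset, t ^ u'.card * c (d - a) (k - u'.card)))
          = ∑ b ∈ Finset.range (k+1),
              (d.choose a : ℝ) * (k.choose b : ℝ) * c (d-a) (k-b) * t ^ (a+b) := by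
        intro a _
        rw [Finset.sum_powerset_apply_card (fun m => t ^ m * c (d - a) (k - m)), hKkcard]
        rw [Finset.mul_sum, Finset.smul_sum, Finset.sum_congr rfl]
        intro b _
        simp only [nsmul_eq_mul, pow_add]
        ring
      rw [Finset.sum_congr rfl h1] at h0
      have hswap : ∑ j ∈ Finset.range (d+k+1),
          (∑ a ∈ Finset.range (d+1), ∑ b ∈ Finset.range (k+1),
            (if a + b = j then (d.choose a : ℝ) * (k.choose b : ℝ) * c (d-a) (k-b) else 0)) * t ^ j
          = ∑ a ∈ Finset.range (d+1), ∑ b ∈ Finset.range (k+1),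
              (d.choose a : ℝ) * (k.choose b : ℝ) * c (d-a) (k-b) * t ^ (a+b) := by
        simp only [Finset.sum_mul]
        rw [Finset.sum_comm]
        refine Finset.sum_congr rfl fun a ha => ?_
        rw [Finset.sum_comm]
        refine Finset.sum_congr rfl fun b hb => ?_
        simp only [ite_mul, zero_mul]
        rw [Finset.sum_ite_eq (Finset.range (d+k+1)) (a+b)
          (fun j => (d.choose a : ℝ) * (k.choose b : ℝ) * c (d-a) (k-b) * t ^ j)]
        rw [if_pos (Finset.mem_range.2 (by
          have := Finset.mem_range.1 ha; have := Finset.mem_range.1 hb; omega))]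
      rw [hswap]
      exact h0
    have hker := poly_coeff_zero (d+k+1) _ hpoly k (by omega)
    -- identify the k-th coefficient
    have hfib : (∑ a ∈ Finset.range (d+1), ∑ b ∈ Finset.range (k+1),
        (if a + b = k then (d.choose a : ℝ) * (k.choose b : ℝ) * c (d-a) (k-b) else 0))
        = ∑ a ∈ Finset.range (k+1), (d.choose a : ℝ) * (k.choose a : ℝ) * c (d-a) a := by
      have inner : ∀ a ∈ Finset.range (d+1),
          (∑ b ∈ Finset.range (k+1),
            if a + b = k then (d.choose a : ℝ) * (k.choose b : ℝ) * c (d-a) (k-b) else 0)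
          = if a ∈ Finset.range (k+1) then
              (d.choose a : ℝ) * (k.choose a : ℝ) * c (d-a) a else 0 := by
        intro a _
        by_cases hak : a ≤ k
        · rw [if_pos (Finset.mem_range.2 (by omega))]
          have hcond : ∀ b : ℕ, (a + b = k) = ((k - a) = b) := fun b => propext (by omega)
          simp only [hcond]
          rw [Finset.sum_ite_eq (Finset.range (k+1)) (k-a)
            (fun b => (d.choose a : ℝ) * (k.choose b : ℝ) * c (d-a) (k-b))]
          rw [if_pos (Finset.mem_range.2 (by omega))]
          rw [Nat.choose_symm hak, (by omega : k - (k - a) = a)]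
        · rw [if_neg (by simp; omega)]
          refine Finset.sum_eq_zero fun b hb => if_neg (by
            have := Finset.mem_range.1 hb; omega)
      rw [Finset.sum_congr rfl inner, Finset.sum_ite_mem,
        (by ext x; simp; omega : Finset.range (d+1) ∩ Finset.range (k+1) = Finset.range (k+1))]
    rw [hfib] at hker
    exact hker
  -- Step 3 : induction
  have key : ∀ k, k ≤ d → (d.choose k : ℝ) * c (d-k) k = (-1 : ℝ)^k * c d 0 := by
    intro k
    induction k using Nat.strong_induction_on with
    | _ k ih =>
      intro hkd
      rcases Nat.eq_zero_or_pos k with rfl | hk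
      · simp
      · have hrel := rel k hk hkd
        rw [Finset.sum_range_succ] at hrel
        have hsub : ∀ a ∈ Finset.range k, (d.choose a : ℝ) * (k.choose a : ℝ) * c (d-a) a
            = ((-1:ℝ)^a * (k.choose a : ℝ)) * c d 0 := by
          intro a ha
          have hak : a < k := Finset.mem_range.1 ha
          have := ih a hak (by omega)
          calc (d.choose a : ℝ) * (k.choose a : ℝ) * c (d-a) a
              = (k.choose a : ℝ) * ((d.choose a : ℝ) * c (d-a) a) := by ring
            _ = (k.choose a : ℝ) * ((-1:ℝ)^a * c d 0) := by rw [this]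
            _ = ((-1:ℝ)^a * (k.choose a : ℝ)) * c d 0 := by ring
        rw [Finset.sum_congr rfl hsub, ← Finset.sum_mul] at hrel
        have halt : ∑ a ∈ Finset.range (k+1), ((-1:ℝ)^a * (k.choose a : ℝ)) = 0 := by
          have h := Int.alternating_sum_range_choose_of_ne hk.ne'
          exact_mod_cast h
        rw [Finset.sum_range_succ] at halt
        have hS : ∑ a ∈ Finset.range k, ((-1:ℝ)^a * (k.choose a : ℝ)) = -(-1:ℝ)^k := by
          simp only [Nat.choose_self, Nat.cast_one, mul_one] at halt
          linarith
        rw [hS] at hrel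
        simp only [Nat.choose_self, Nat.cast_one, mul_one] at hrel ⊢
        linarith
  have hfin := key d le_rfl
  simp only [Nat.choose_self, Nat.cast_one, one_mul, Nat.sub_self] at hfin
  have g1 : (fun i : Fin d => if (i : ℕ) < 0 then X else P) = (fun _ => P) := by
    funext i; simp
  have g2 : (fun i : Fin d => if (i : ℕ) < d then X else P) = (fun _ => X) := by
    funext i; simp [i.isLt]
  simp only [hc] at hfin
  rw [g1, g2] at hfin
  exact hfin
end

section
/- For quaternions z, z' ∈ ℍ, Σ_{α=1}^{3} ⟨i_α z, z'⟩² = Σ_{α=1}^{3} ⟨z i_α, z'⟩², where i_1, i_2, i_3 are the standard imaginary quaternion units, and ⟨·,·⟩ is the standard Euclidean inner product on ℍ ≅ ℝ⁴. -/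
/-- for quaternions z, z', Σ_{α=1}^3 ⟨i_α z, z'⟩² = Σ_{α=1}^3 ⟨z i_α, z'⟩²,
where ⟨q,q'⟩ = Re(q · conj q') and i₁, i₂, i₃ = i, j, k. -/
theorem stmt_6 (z z' : Quaternion ℝ)
    (i j k : Quaternion ℝ)
    (hi : i = ⟨0, 1, 0, 0⟩) (hj : j = ⟨0, 0, 1, 0⟩) (hk : k = ⟨0, 0, 0, 1⟩) :
    ((i * z) * star z').re ^ 2 + ((j * z) * star z').re ^ 2 + ((k * z) * star z').re ^ 2
    = ((z * i) * star z').re ^ 2 + ((z * j) * star z').re ^ 2 + ((z * k) * star z').re ^ 2 := by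
  obtain ⟨hi1, hi2, hi3, hi4⟩ : i.re = 0 ∧ i.imI = 1 ∧ i.imJ = 0 ∧ i.imK = 0 := by subst hi; exact ⟨rfl, rfl, rfl, rfl⟩
  obtain ⟨hj1, hj2, hj3, hj4⟩ : j.re = 0 ∧ j.imI = 0 ∧ j.imJ = 1 ∧ j.imK = 0 := by subst hj; exact ⟨rfl, rfl, rfl, rfl⟩
  obtain ⟨hk1, hk2, hk3, hk4⟩ : k.re = 0 ∧ k.imI = 0 ∧ k.imJ = 0 ∧ k.imK = 1 := by subst hk; exact ⟨rfl, rfl, rfl, rfl⟩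
  simp [Quaternion.re_mul, Quaternion.re_star, Quaternion.imI_star,
    Quaternion.imJ_star, Quaternion.imK_star, Quaternion.imI_mul,
    Quaternion.imJ_mul, Quaternion.imK_mul, hi1, hi2, hi3, hi4, hj1, hj2, hj3, hj4, hk1, hk2, hk3, hk4]
  ring
end

section
/- Let V be a finite-dimensional real vector space, R an algebraic curvature tensor on V, and K₂ : V⁴ → ℝ a multilinear form symmetric in its first two and last two arguments with K₂(X,X,X,P) = 0 for all X, P. Then the identity K₂(X,P,R(P,X)X,R(P,X)X) + K₂(X,X,R(P,X)X,R(X,P)P) = 0 for all X, P ∈ V implies the identity K₂(X,X,R(X,P)P,R(X,P)P) = K₂(P,P,R(P,X)X,R(P,X)X) for all X, P ∈ V, and conversely the latter identity implies the former. -/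
/-!
Both implications are polarizations; call the first identity the mixed identity and the second
the balance identity. As R is alternating, replacing X by X ± P leaves R(X,P)P unchanged and turns
R(P,X)X into R(P,X)X ∓ R(X,P)P, so subtracting an identity at X - P from the one at X + P isolates
its terms of degree one in P (the cubic terms cancel). For the mixed identity these are, up to the
symmetries of K₂, the difference of the two sides of the balance identity. For the balance identity
they give K₂(X,P,R(X,P)P,R(X,P)P) = -K₂(P,P,R(P,X)X,R(X,P)P), which with X and P exchanged is the
mixed identity.
-/

namespace MultilinearMap

section Semiring

variable {R M N : Type*} [Semiring R] [AddCommMonoid M] [AddCommMonoid N] [Module R M]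
  [Module R N] (K : MultilinearMap R (fun _ : Fin 4 => M) N) (a b c d x : M)

theorem map_vec4_add_0 : K ![a + x, b, c, d] = K ![a, b, c, d] + K ![x, b, c, d] := by
  convert K.map_update_add ![a, b, c, d] 0 a x using 3 <;> ext i <;> fin_cases i <;> rfl

theorem map_vec4_add_1 : K ![a, b + x, c, d] = K ![a, b, c, d] + K ![a, x, c, d] := by
  convert K.map_update_add ![a, b, c, d] 1 b x using 3 <;> ext i <;> fin_cases i <;> rfl

theorem map_vec4_add_2 : K ![a, b, c + x, d] = K ![a, b, c, d] + K ![a, b, x, d] := by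
  convert K.map_update_add ![a, b, c, d] 2 c x using 3 <;> ext i <;> fin_cases i <;> rfl

theorem map_vec4_add_3 : K ![a, b, c, d + x] = K ![a, b, c, d] + K ![a, b, c, x] := by
  convert K.map_update_add ![a, b, c, d] 3 d x using 3 <;> ext i <;> fin_cases i <;> rfl

end Semiring

section Ring

variable {R M N : Type*} [Ring R] [AddCommGroup M] [AddCommGroup N] [Module R M]
  [Module R N] (K : MultilinearMap R (fun _ : Fin 4 => M) N) (a b c d x : M)

theorem map_vec4_sub_0 : K ![a - x, b, c, d] = K ![a, b, c, d] - K ![x, b, c, d] := by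
  convert K.map_update_sub ![a, b, c, d] 0 a x using 3 <;> ext i <;> fin_cases i <;> rfl

theorem map_vec4_sub_1 : K ![a, b - x, c, d] = K ![a, b, c, d] - K ![a, x, c, d] := by
  convert K.map_update_sub ![a, b, c, d] 1 b x using 3 <;> ext i <;> fin_cases i <;> rfl

theorem map_vec4_sub_2 : K ![a, b, c - x, d] = K ![a, b, c, d] - K ![a, b, x, d] := by
  convert K.map_update_sub ![a, b, c, d] 2 c x using 3 <;> ext i <;> fin_cases i <;> rfl

theorem map_vec4_sub_3 : K ![a, b, c, d - x] = K ![a, b, c, d] - K ![a, b, c, x] := by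
  convert K.map_update_sub ![a, b, c, d] 3 d x using 3 <;> ext i <;> fin_cases i <;> rfl

end Ring

end MultilinearMap

section Curvature

variable {𝕜 V : Type*} [CommRing 𝕜] [AddCommGroup V] [Module 𝕜 V]
  {R : V →ₗ[𝕜] V →ₗ[𝕜] V →ₗ[𝕜] V}

theorem curvature_self_eq_zero_of_skew [CharZero 𝕜] [IsDomain 𝕜] [Module.IsTorsionFree 𝕜 V]
    (hskew : ∀ X Y, R X Y = -R Y X) (X : V) : R X X = 0 := by
  have h2 : (2 : 𝕜) • R X X = 0 := by
    rw [two_smul]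
    nth_rewrite 1 [hskew X X]
    exact neg_add_cancel _
  exact (smul_eq_zero.mp h2).resolve_left two_ne_zero

variable (hR : ∀ X, R X X = 0)
include hR

theorem curvature_swap_apply (X P : V) : R P X P = -R X P P := by
  have h : R X P + R P X = 0 := by simpa [hR] using hR (X + P)
  exact eq_neg_of_add_eq_zero_right (LinearMap.congr_fun h P)

theorem curvature_add_left (X P : V) : R (X + P) P P = R X P P := by
  simp [hR]

theorem curvature_sub_left (X P : V) : R (X - P) P P = R X P P := by
  simp [hR]

theorem curvature_add_right (X P : V) : R P (X + P) (X + P) = R P X X - R X P P := by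
  simp [hR, curvature_swap_apply hR, sub_eq_add_neg]

theorem curvature_sub_right (X P : V) : R P (X - P) (X - P) = R P X X + R X P P := by
  simp [hR, curvature_swap_apply hR]

end Curvature

section Polarization

open MultilinearMap

variable {V : Type*} [AddCommGroup V] [Module ℝ V] {R : V →ₗ[ℝ] V →ₗ[ℝ] V →ₗ[ℝ] V}
  {K : MultilinearMap ℝ (fun _ : Fin 4 => V) ℝ}
  (hR : ∀ X, R X X = 0)
  (hs1 : ∀ X Y Z W : V, K ![X, Y, Z, W] = K ![Y, X, Z, W])
  (hs2 : ∀ X Y Z W : V, K ![X, Y, Z, W] = K ![X, Y, W, Z])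
include hR hs1 hs2

theorem balance_of_mixed
    (hA : ∀ X P : V, K ![X, P, R P X X, R P X X] + K ![X, X, R P X X, R X P P] = 0)
    (X P : V) : K ![X, X, R X P P, R X P P] = K ![P, P, R P X X, R P X X] := by
  have h_add := hA (X + P) P
  have h_sub := hA (X - P) P
  rw [curvature_add_left hR, curvature_add_right hR] at h_add
  rw [curvature_sub_left hR, curvature_sub_right hR] at h_sub
  simp only [map_vec4_add_0, map_vec4_add_1, map_vec4_add_2, map_vec4_add_3, map_vec4_sub_0,
    map_vec4_sub_1, map_vec4_sub_2, map_vec4_sub_3] at h_add h_sub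
  linarith [hs1 X P (R P X X) (R X P P), hs2 X P (R P X X) (R X P P)]

theorem cross_eq_neg_of_balance
    (hB : ∀ X P : V, K ![X, X, R X P P, R X P P] = K ![P, P, R P X X, R P X X])
    (X P : V) : K ![X, P, R X P P, R X P P] = -K ![P, P, R P X X, R X P P] := by
  have h_add := hB (X + P) P
  have h_sub := hB (X - P) P
  rw [curvature_add_left hR, curvature_add_right hR] at h_add
  rw [curvature_sub_left hR, curvature_sub_right hR] at h_sub
  simp only [map_vec4_add_0, map_vec4_add_1, map_vec4_add_2, map_vec4_add_3, map_vec4_sub_0,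
    map_vec4_sub_1, map_vec4_sub_2, map_vec4_sub_3] at h_add h_sub
  linarith [hs1 X P (R X P P) (R X P P), hs2 P P (R P X X) (R X P P)]

theorem mixed_of_balance
    (hB : ∀ X P : V, K ![X, X, R X P P, R X P P] = K ![P, P, R P X X, R P X X])
    (X P : V) : K ![X, P, R P X X, R P X X] + K ![X, X, R P X X, R X P P] = 0 := by
  linarith [cross_eq_neg_of_balance hR hs1 hs2 hB P X, hs1 X P (R P X X) (R P X X),
    hs2 X X (R X P P) (R P X X)]

end Polarization

theorem stmt_13_general {V : Type*} [AddCommGroup V] [Module ℝ V]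
    (R : V →ₗ[ℝ] V →ₗ[ℝ] V →ₗ[ℝ] V)
    (hskew : ∀ X Y : V, R X Y = -R Y X)
    (K : MultilinearMap ℝ (fun _ : Fin 4 => V) ℝ)
    (hs1 : ∀ X Y Z W : V, K ![X, Y, Z, W] = K ![Y, X, Z, W])
    (hs2 : ∀ X Y Z W : V, K ![X, Y, Z, W] = K ![X, Y, W, Z]) :
    (∀ X P : V, K ![X, P, R P X X, R P X X] + K ![X, X, R P X X, R X P P] = 0)
    ↔ (∀ X P : V, K ![X, X, R X P P, R X P P] = K ![P, P, R P X X, R P X X]) := by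
  have hR := curvature_self_eq_zero_of_skew hskew
  exact ⟨balance_of_mixed hR hs1 hs2, mixed_of_balance hR hs1 hs2⟩

/-- for an algebraic curvature tensor R and a (0,4)-tensor K₂ symmetric in its
first two and last two slots with K₂(X,X,X,P)=0, the identity
K₂(X,P,R(P,X)X,R(P,X)X) + K₂(X,X,R(P,X)X,R(X,P)P) = 0 (for all X,P) is equivalent to
K₂(X,X,R(X,P)P,R(X,P)P) = K₂(P,P,R(P,X)X,R(P,X)X) (for all X,P). -/
theorem stmt_13 {V : Type*} [AddCommGroup V] [Module ℝ V] [FiniteDimensional ℝ V]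
    (R : V →ₗ[ℝ] V →ₗ[ℝ] V →ₗ[ℝ] V)
    (hskew : ∀ X Y : V, R X Y = -R Y X)
    (hbianchi : ∀ X Y Z : V, R X Y Z + R Y Z X + R Z X Y = 0)
    (K : MultilinearMap ℝ (fun _ : Fin 4 => V) ℝ)
    (hs1 : ∀ X Y Z W : V, K ![X, Y, Z, W] = K ![Y, X, Z, W])
    (hs2 : ∀ X Y Z W : V, K ![X, Y, Z, W] = K ![X, Y, W, Z])
    (hvan : ∀ X P : V, K ![X, X, X, P] = 0) :
    (∀ X P : V, K ![X, P, R P X X, R P X X] + K ![X, X, R P X X, R X P P] = 0)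
    ↔ (∀ X P : V, K ![X, X, R X P P, R X P P] = K ![P, P, R P X X, R P X X]) :=
  stmt_13_general R hskew K hs1 hs2
end

section
/- Let M = F/Γ be a flat torus (ℝⁿ modulo a lattice, with the flat metric). Then every Killing tensor field on M is parallel; equivalently, every polynomial-in-momenta integral of the geodesic flow of a flat torus has constant coefficients in the standard affine coordinates. -/
open MvPolynomial

set_option maxRecDepth 8000

/-- A multivariate real polynomial vanishing at all integer points is zero. -/
theorem mv_zero_of_int_aux14 : ∀ {n : ℕ} (P : MvPolynomial (Fin n) ℝ),
    (∀ m : Fin n → ℤ, eval (fun i => (m i : ℝ)) P = 0) → P = 0 := by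
  intro n
  induction n with
  | zero =>
    intro P h
    obtain ⟨c, rfl⟩ := MvPolynomial.C_surjective (Fin 0) P
    have := h 0
    simpa using this
  | succ n ih =>
    intro P h
    have hQ : ∀ m : Fin n → ℤ, ∀ k,
        eval (fun i => (m i : ℝ)) ((finSuccEquiv ℝ n P).coeff k) = 0 := by
      intro m k
      have hpoly : (Polynomial.map (eval (fun i => ((m i : ℤ) : ℝ))) (finSuccEquiv ℝ n P)) = 0 := by
        apply Polynomial.eq_zero_of_infinite_isRoot
        apply Set.Infinite.mono (s := Set.range (Int.cast : ℤ → ℝ))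
        · rintro _ ⟨z, rfl⟩
          have := h (Fin.cons z m)
          have hc : (fun i => ((Fin.cons z m : Fin (n+1) → ℤ) i : ℝ))
              = Fin.cons ((z : ℝ)) (fun i => ((m i : ℤ) : ℝ)) := by
            funext i
            refine Fin.cases ?_ ?_ i <;> simp
          rw [hc, MvPolynomial.eval_eq_eval_mv_eval'] at this
          exact this
        · exact Set.infinite_range_of_injective Int.cast_injective
      have := congrArg (fun q => Polynomial.coeff q k) hpoly
      simpa [Polynomial.coeff_map] using this
    have hzero : finSuccEquiv ℝ n P = 0 := by
      apply Polynomial.ext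
      intro k
      rw [Polynomial.coeff_zero]
      exact ih _ (fun m => hQ m k)
    exact (finSuccEquiv ℝ n).injective (by rw [hzero, map_zero])

/-- every Killing tensor field on a flat torus is parallel: if the symmetric
coefficients K_ι are smooth, periodic with respect to a lattice (the ℤ-span of a basis b),
and the polynomial-in-momenta function Σ_ι K_ι(x) p^ι is constant along every straight-line
geodesic s ↦ x + s·p, then each coefficient function K_ι is constant. -/
theorem stmt_14 {n d : ℕ}
    (b : Module.Basis (Fin n) ℝ (EuclideanSpace ℝ (Fin n)))
    (K : (Fin d → Fin n) → EuclideanSpace ℝ (Fin n) → ℝ)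
    (hsmooth : ∀ ι, ContDiff ℝ (⊤ : ℕ∞) (K ι))
    (hsym : ∀ (ι : Fin d → Fin n) (σ : Equiv.Perm (Fin d)), K (ι ∘ σ) = K ι)
    (hper : ∀ (ι : Fin d → Fin n) (x : EuclideanSpace ℝ (Fin n)) (i : Fin n),
      K ι (x + b i) = K ι x)
    (hkill : ∀ (x p : EuclideanSpace ℝ (Fin n)) (s : ℝ),
      (∑ ι : Fin d → Fin n, K ι (x + s • p) * ∏ i, p (ι i))
        = ∑ ι : Fin d → Fin n, K ι x * ∏ i, p (ι i)) :
    ∀ (ι : Fin d → Fin n) (x y : EuclideanSpace ℝ (Fin n)), K ι x = K ι y := by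
  classical
  intro ι₀ x y
  set v : EuclideanSpace ℝ (Fin n) := y - x with hv
  set c : (Fin d → Fin n) → ℝ := fun ι => K ι y - K ι x with hc
  -- Step A: periodicity under the whole lattice
  have hint : ∀ (ι : Fin d → Fin n) (z : EuclideanSpace ℝ (Fin n)) (i : Fin n) (k : ℤ),
      K ι (z + (k : ℝ) • b i) = K ι z := by
    intro ι z i k
    induction k using Int.induction_on with
    | zero => simp
    | succ k ihk =>
      have h1 : z + ((((k : ℤ) + 1 : ℤ)) : ℝ) • b i = (z + ((k : ℤ) : ℝ) • b i) + b i := by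
        push_cast
        module
      rw [h1, hper, ihk]
    | pred k ihk =>
      have h1 : z + ((-(k : ℤ) - 1 : ℤ) : ℝ) • b i + b i = z + ((-(k : ℤ) : ℤ) : ℝ) • b i := by
        push_cast
        module
      have h2 := hper ι (z + ((-(k : ℤ) - 1 : ℤ) : ℝ) • b i) i
      rw [h1] at h2
      rw [← h2]
      exact ihk
  have hlat : ∀ (ι : Fin d → Fin n) (z : EuclideanSpace ℝ (Fin n)) (m : Fin n → ℤ),
      K ι (z + ∑ i, ((m i : ℝ)) • b i) = K ι z := by
    intro ι z m
    have : ∀ s : Finset (Fin n), K ι (z + ∑ i ∈ s, ((m i : ℝ)) • b i) = K ι z := by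
      intro s
      induction s using Finset.induction_on with
      | empty => simp
      | @insert a s ha ih =>
        rw [Finset.sum_insert ha]
        have h1 : z + ((m a : ℝ) • b a + ∑ i ∈ s, (m i : ℝ) • b i)
            = (z + ∑ i ∈ s, (m i : ℝ) • b i) + (m a : ℝ) • b a := by module
        rw [h1, hint, ih]
    exact this Finset.univ
  -- Step B: the killing condition at lattice-translated momenta
  have key : ∀ m : Fin n → ℤ,
      ∑ ι : Fin d → Fin n, c ι * ∏ i, (v + ∑ j, ((m j : ℝ)) • b j) (ι i) = 0 := by
    intro m
    set w : EuclideanSpace ℝ (Fin n) := ∑ j, ((m j : ℝ)) • b j with hw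
    have hk := hkill x (v + w) 1
    rw [one_smul] at hk
    have hxy : x + (v + w) = y + w := by rw [hv]; abel
    rw [hxy] at hk
    have hky : ∀ ι, K ι (y + w) = K ι y := fun ι => hlat ι y m
    simp_rw [hky] at hk
    simp_rw [hc, sub_mul, Finset.sum_sub_distrib, hk, sub_self]
  -- Step C: polynomial machinery
  set S : MvPolynomial (Fin n) ℝ :=
    ∑ ι : Fin d → Fin n, C (c ι) * ∏ i, X (ι i) with hS
  have hSeval : ∀ p : Fin n → ℝ, eval p S = ∑ ι : Fin d → Fin n, c ι * ∏ i, p (ι i) := by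
    intro p
    rw [hS, map_sum]
    apply Finset.sum_congr rfl
    intro ι _
    rw [map_mul, eval_C, eval_prod]
    simp only [eval_X]
  set f : Fin n → MvPolynomial (Fin n) ℝ :=
    fun j => C (v j) + ∑ i, C ((b i : EuclideanSpace ℝ (Fin n)) j) * X i with hf
  set T : MvPolynomial (Fin n) ℝ := bind₁ f S with hT
  have haev : ∀ (g : Fin n → ℝ) (p : MvPolynomial (Fin n) ℝ), aeval (S₁ := ℝ) g p = eval g p :=
    fun g p => RingHom.congr_fun (MvPolynomial.coe_aeval_eq_eval g) p
  have hTeval : ∀ t : Fin n → ℝ,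
      eval t T = eval (fun j => (v + ∑ i, t i • b i) j) S := by
    intro t
    have h1 : eval t T = eval (fun j => eval t (f j)) S := by
      rw [hT, ← haev, aeval_bind₁]
      simp only [haev]
    rw [h1]
    have harg : (fun j => eval t (f j)) = fun j => (v + ∑ i, t i • b i) j := by
      funext j
      have hcoord : (v + ∑ i, t i • b i) j
          = v j + ∑ i, t i * (b i : EuclideanSpace ℝ (Fin n)) j := by
        have hs : (∑ i, t i • b i : EuclideanSpace ℝ (Fin n)) j
            = ∑ i, t i * (b i : EuclideanSpace ℝ (Fin n)) j := by
          have h5 : (∑ i, t i • b i : EuclideanSpace ℝ (Fin n)) j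
              = EuclideanSpace.proj (𝕜 := ℝ) j (∑ i, t i • b i) := rfl
          rw [h5, map_sum]
          apply Finset.sum_congr rfl
          intro i _
          rfl
        simp [PiLp.add_apply, hs]
      rw [hcoord, hf]
      simp [mul_comm]
    rw [harg]
  have hT0 : T = 0 := by
    apply mv_zero_of_int_aux14
    intro m
    rw [hTeval, hSeval]
    exact key m
  have hS0 : ∀ p : Fin n → ℝ, eval p S = 0 := by
    intro p
    set pE : EuclideanSpace ℝ (Fin n) := WithLp.toLp 2 p with hpE
    set t : Fin n → ℝ := fun i => b.repr (pE - v) i with ht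
    have hrepr : (∑ i, t i • b i : EuclideanSpace ℝ (Fin n)) = pE - v := b.sum_repr (pE - v)
    have h2 := hTeval t
    rw [hT0, map_zero] at h2
    have hvp : v + (∑ i, t i • b i : EuclideanSpace ℝ (Fin n)) = pE := by rw [hrepr]; abel
    rw [hvp] at h2
    exact h2.symm
  have hSzero : S = 0 := by
    apply MvPolynomial.funext
    intro p
    rw [hS0 p, map_zero]
  -- Step D: extract coefficients
  set e : (Fin d → Fin n) → (Fin n →₀ ℕ) := fun ι => ∑ k, Finsupp.single (ι k) 1 with he
  have hmono : ∀ ι : Fin d → Fin n,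
      (∏ i, (X (ι i) : MvPolynomial (Fin n) ℝ)) = monomial (e ι) 1 := by
    intro ι
    rw [he]
    have haux : ∀ s : Finset (Fin d),
        (∏ i ∈ s, (X (ι i) : MvPolynomial (Fin n) ℝ))
          = monomial (∑ k ∈ s, Finsupp.single (ι k) 1) 1 := by
      intro s
      induction s using Finset.induction_on with
      | empty => rw [Finset.prod_empty, Finset.sum_empty, monomial_zero', C_1]
      | @insert a s ha ih =>
        rw [Finset.prod_insert ha, Finset.sum_insert ha, ih, X, monomial_mul, one_mul]
    exact haux Finset.univ
  have hcoeff : coeff (e ι₀) S = ∑ ι : Fin d → Fin n, if e ι = e ι₀ then c ι else 0 := by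
    rw [hS, MvPolynomial.coeff_sum]
    apply Finset.sum_congr rfl
    intro ι _
    rw [hmono ι, C_mul_monomial, mul_one, coeff_monomial]
  have hfiber : ∀ ι : Fin d → Fin n, e ι = e ι₀ → c ι = c ι₀ := by
    intro ι hee
    have happ : ∀ (ι' : Fin d → Fin n) (j : Fin n),
        (e ι') j = Fintype.card {k // ι' k = j} := by
      intro ι' j
      rw [he]
      rw [Finsupp.finset_sum_apply, Fintype.card_subtype, Finset.card_eq_sum_ones,
        Finset.sum_filter]
      apply Finset.sum_congr rfl
      intro k _
      simp [Finsupp.single_apply, eq_comm]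
    have hcard : ∀ j : Fin n, Fintype.card {k // ι k = j} = Fintype.card {k // ι₀ k = j} := by
      intro j
      have h3 := congrArg (fun g => g j) hee
      simpa [happ ι, happ ι₀] using h3
    set σ : Equiv.Perm (Fin d) :=
      Equiv.ofFiberEquiv (f := ι₀) (g := ι)
        (fun j => Fintype.equivOfCardEq ((hcard j).symm)) with hσ
    have hcomp : ι ∘ σ = ι₀ := by
      funext k
      exact Equiv.ofFiberEquiv_map _ k
    have h4 := hsym ι σ
    rw [hcomp] at h4
    show K ι y - K ι x = K ι₀ y - K ι₀ x
    rw [h4]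
  have hsum0 : (0 : ℝ) = ∑ ι : Fin d → Fin n, if e ι = e ι₀ then c ι₀ else 0 := by
    have h1 : (0 : ℝ) = ∑ ι : Fin d → Fin n, if e ι = e ι₀ then c ι else 0 := by
      rw [← hcoeff, hSzero]
      simp
    refine h1.trans (Finset.sum_congr rfl ?_)
    intro ι _
    by_cases hee : e ι = e ι₀
    · simp [hee, hfiber ι hee]
    · simp [hee]
  rw [← Finset.sum_filter, Finset.sum_const] at hsum0
  have hmem : ι₀ ∈ Finset.filter (fun ι => e ι = e ι₀) Finset.univ := by simp
  have hcardpos : 0 < (Finset.filter (fun ι => e ι = e ι₀) Finset.univ).card :=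
    Finset.card_pos.mpr ⟨ι₀, hmem⟩
  have hmul : ((Finset.filter (fun ι => e ι = e ι₀) Finset.univ).card : ℝ) * c ι₀ = 0 := by
    rw [nsmul_eq_mul] at hsum0
    linarith
  have hne : ((Finset.filter (fun ι => e ι = e ι₀) Finset.univ).card : ℝ) ≠ 0 := by
    exact_mod_cast hcardpos.ne'
  have hc0 : c ι₀ = 0 := by
    rcases mul_eq_zero.mp hmul with h' | h'
    · exact absurd h' hne
    · exact h'
  have hfin : K ι₀ y - K ι₀ x = 0 := hc0
  linarith
end
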